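/- arXiv:2511.06671 — 2 statements merged into one kernel-verified Lean document; each statement's English description precedes it below -/
import Mathlib

section
/- Let $\sigma' \in (0,1)$, $a \in (0,1)$, $N \geq 1$, and let $q > \frac{2}{1-\sigma'}$ be large enough that $(1-a)^{q\sigma'+2-q} - q(N-1)(1-a) - q(q-1) \geq 0$. Then the radial function $\overline{w}(x) = ((|x|-a)_+)^q$ on the unit ball $B_1(0) \subset \mathbb{R}^N$ is of class $C^2$, vanishes identically on $B_a(0)$, equals $(1-a)^q$ on $\partial B_1(0)$, and satisfies $-\Delta \overline{w} + \overline{w}^{\sigma'} \geq 0$ pointwise in $B_1(0)$. -/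
open Real Set Filter Topology

/-!
Near the origin `w̄` vanishes, and away from it `w̄` is `g(r) = ((r - a)₊)^q`, which is `C²`
because `q > 2`, composed with the smooth norm. For `a < r < 1`, write `s = r - a`; factoring
out `s^(q-2)`, the radial operator `-g'' - (N-1)/r g' + g^σ'` becomes
`s^(q-2) (s^(qσ'+2-q) - q(N-1) s/r - q(q-1))`. The exponent `qσ'+2-q` is negative since
`q(1-σ') > 2`, so `s^(qσ'+2-q) ≥ (1-a)^(qσ'+2-q)`, while `s/r = 1 - a/r ≤ 1 - a`; hence the
bracket dominates the quantity assumed nonnegative.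
-/

theorem hasDerivAt_max_zero_rpow {p : ℝ} (hp : 1 < p) (s : ℝ) :
    HasDerivAt (fun t : ℝ => max t 0 ^ p) (p * max s 0 ^ (p - 1)) s := by
  have hp0 : p - 1 ≠ 0 := by linarith
  rcases lt_trichotomy s 0 with hs | rfl | hs
  · rw [max_eq_right hs.le, zero_rpow hp0, mul_zero]
    refine (hasDerivAt_const s ((0 : ℝ) ^ p)).congr_of_eventuallyEq ?_
    filter_upwards [Iio_mem_nhds hs] with t ht
    rw [max_eq_right ht.le]
  · rw [max_self, zero_rpow hp0, mul_zero, ← hasDerivWithinAt_univ, ← Iic_union_Ici]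
    refine .union ?_ ?_
    · refine (hasDerivWithinAt_const 0 _ ((0 : ℝ) ^ p)).congr_of_mem (fun t ht => ?_) self_mem_Iic
      rw [max_eq_right ht]
    · have h := (hasDerivAt_rpow_const (x := 0) (Or.inr hp.le)).hasDerivWithinAt (s := Ici 0)
      rw [zero_rpow hp0, mul_zero] at h
      exact h.congr_of_mem (fun t ht => by rw [max_eq_left ht]) self_mem_Ici
  · rw [max_eq_left hs.le]
    refine (hasDerivAt_rpow_const (Or.inl hs.ne')).congr_of_eventuallyEq ?_
    filter_upwards [Ioi_mem_nhds hs] with t ht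
    rw [max_eq_left ht.le]

theorem deriv_max_sub_rpow {p : ℝ} (hp : 1 < p) (a : ℝ) :
    deriv (fun t : ℝ => max (t - a) 0 ^ p) = fun t => p * max (t - a) 0 ^ (p - 1) :=
  funext fun t => ((hasDerivAt_max_zero_rpow hp (t - a)).comp_sub_const t a).deriv

theorem contDiff_max_zero_rpow : ∀ {n : ℕ} {p : ℝ}, (n : ℝ) < p →
    ContDiff ℝ n (fun t : ℝ => max t 0 ^ p)
  | 0, p, hp => contDiff_zero.mpr <|
      (continuous_id.max continuous_const).rpow_const fun _ => Or.inr (by simpa using hp.le)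
  | n + 1, p, hp => by
    have hp1 : 1 < p := by push_cast at hp; linarith [n.cast_nonneg (α := ℝ)]
    have hderiv := deriv_max_sub_rpow hp1 0
    simp only [sub_zero] at hderiv
    rw [Nat.cast_add, Nat.cast_one, contDiff_succ_iff_deriv, hderiv]
    refine ⟨fun s => (hasDerivAt_max_zero_rpow hp1 s).differentiableAt, by simp, ?_⟩
    exact contDiff_const.mul (contDiff_max_zero_rpow (by push_cast at hp; linarith))

theorem contDiff_comp_norm {E : Type*} [NormedAddCommGroup E] [InnerProductSpace ℝ E]
    {n : WithTop ℕ∞} {g : ℝ → ℝ} (hg : ContDiff ℝ n g) (hg0 : g =ᶠ[𝓝 0] fun _ => g 0) :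
    ContDiff ℝ n (fun x : E => g ‖x‖) := by
  refine contDiff_iff_contDiffAt.mpr fun x => ?_
  rcases eq_or_ne x 0 with rfl | hx
  · refine (contDiffAt_const (c := g 0)).congr_of_eventuallyEq ?_
    have hnorm : Tendsto (fun x : E => ‖x‖) (𝓝 0) (𝓝 0) := by
      simpa using (continuous_norm (E := E)).tendsto 0
    exact hnorm.eventually hg0
  · exact hg.contDiffAt.comp x (contDiffAt_norm ℝ hx)

theorem radial_supersolution_of_mem_Ioo {N σ' a q r : ℝ} (hN : 0 ≤ N - 1) (ha : 0 < a)
    (hq : 0 ≤ q) (hexp : q * σ' + 2 - q ≤ 0)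
    (hq2 : (1 - a) ^ (q * σ' + 2 - q) - q * (N - 1) * (1 - a) - q * (q - 1) ≥ 0)
    (hr : r ∈ Ioo a 1) :
    0 ≤ -(q * ((q - 1) * (r - a) ^ (q - 2)) + (N - 1) / r * (q * (r - a) ^ (q - 1)))
      + ((r - a) ^ q) ^ σ' := by
  obtain ⟨har, hr1⟩ := hr
  have hs : 0 < r - a := by linarith
  have hr0 : 0 < r := by linarith
  have hpow : (1 - a) ^ (q * σ' + 2 - q) ≤ (r - a) ^ (q * σ' + 2 - q) :=
    rpow_le_rpow_of_nonpos hs (by linarith) hexp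
  have hratio : (r - a) / r ≤ 1 - a := by
    rw [div_le_iff₀ hr0]; nlinarith
  have hpow_σ : ((r - a) ^ q) ^ σ' = (r - a) ^ (q * σ' + 2 - q) * (r - a) ^ (q - 2) := by
    rw [← rpow_mul hs.le, ← rpow_add hs]; ring_nf
  have hpow_one : (r - a) ^ (q - 1) = (r - a) * (r - a) ^ (q - 2) := by
    rw [show q - 1 = 1 + (q - 2) by ring, rpow_add hs, rpow_one]
  have hfactor : -(q * ((q - 1) * (r - a) ^ (q - 2)) + (N - 1) / r * (q * (r - a) ^ (q - 1)))
      + ((r - a) ^ q) ^ σ' = (r - a) ^ (q - 2) *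
        ((r - a) ^ (q * σ' + 2 - q) - q * (N - 1) * ((r - a) / r) - q * (q - 1)) := by
    rw [hpow_σ, hpow_one]
    ring
  rw [hfactor]
  refine mul_nonneg (rpow_nonneg hs.le _) ?_
  linarith [mul_le_mul_of_nonneg_left hratio (mul_nonneg hq hN)]

theorem stmt_0 (N : ℕ) (hN : 1 ≤ N) (σ' a q : ℝ)
    (hσ : σ' ∈ Set.Ioo (0:ℝ) 1) (ha : a ∈ Set.Ioo (0:ℝ) 1)
    (hq : q > 2 / (1 - σ'))
    (hq2 : (1 - a) ^ (q * σ' + 2 - q) - q * ((N:ℝ) - 1) * (1 - a) - q * (q - 1) ≥ 0)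
    (g : ℝ → ℝ) (hg : g = fun r => (max (r - a) 0) ^ q)
    (w : EuclideanSpace ℝ (Fin N) → ℝ) (hw : w = fun x => g ‖x‖) :
    ContDiff ℝ 2 w ∧
    (∀ x : EuclideanSpace ℝ (Fin N), ‖x‖ ≤ a → w x = 0) ∧
    (∀ x : EuclideanSpace ℝ (Fin N), ‖x‖ = 1 → w x = (1 - a) ^ q) ∧
    (∀ r ∈ Set.Ioo a 1,
      0 ≤ -(deriv (deriv g) r + ((N:ℝ) - 1) / r * deriv g r) + (g r) ^ σ') := by
  obtain ⟨ha0, ha1⟩ := ha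
  have hqσ : 2 < q * (1 - σ') := by
    rwa [gt_iff_lt, div_lt_iff₀ (by linarith [hσ.2])] at hq
  have hq0 : 0 < q := by nlinarith [hσ.1, hσ.2]
  have hq_gt_two : 2 < q := by nlinarith [hσ.1]
  have hg_le : ∀ r ≤ a, g r = 0 := fun r hr => by
    simp only [hg, max_eq_right (sub_nonpos.mpr hr), zero_rpow hq0.ne']
  subst hw
  refine ⟨?_, fun x hx => hg_le _ hx, fun x hx => ?_, fun r hr => ?_⟩
  · refine contDiff_comp_norm ?_ ?_
    · rw [hg]
      exact (contDiff_max_zero_rpow (n := 2) (by exact_mod_cast hq_gt_two)).comp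
        (contDiff_id.sub contDiff_const)
    · filter_upwards [Iio_mem_nhds ha0] with r hr
      rw [hg_le r hr.le, hg_le 0 ha0.le]
  · simp only [hg, hx, max_eq_left (sub_nonneg.mpr ha1.le)]
  · have hs : 0 < r - a := sub_pos.mpr hr.1
    subst hg
    rw [deriv_max_sub_rpow (by linarith), deriv_const_mul_field',
      deriv_max_sub_rpow (by linarith), sub_sub, one_add_one_eq_two]
    simp only [max_eq_left hs.le]
    exact radial_supersolution_of_mem_Ioo (by simpa using hN) ha0 hq0.le
      (by nlinarith) hq2 hr
end

section
/- Let $H$ be a Hilbert space, $E \subset H$ a closed subspace, and $L : H \to H$ a bounded self-adjoint operator. Suppose there exist a decomposition of every $\varphi \in E$ as $\varphi = \varphi_1 + \varphi_2$ with $\varphi_1, \varphi_2 \in E$, $\|\varphi_1\| + \|\varphi_2\| \leq 2\|\varphi\|$, and constants $\varrho > 0$, $\epsilon_1, \epsilon_2 \geq 0$ with $8(\epsilon_1 + \epsilon_2) < \min\{\varrho, 1\}$ such that for all $\varphi \in E$: (i) $\langle L\varphi, \varphi_2 \rangle \geq \frac{1}{2}\|\varphi_2\|^2 - \epsilon_1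 \|\varphi\|^2$, and (ii) $\|L\varphi\| \geq \varrho\|\varphi_1\| - \epsilon_2\|\varphi\|$. Then $\|L\varphi\| \geq \frac{1}{16}\min\{\varrho, 1\}\|\varphi\|$ for all $\varphi \in E$, so $L|_E$ is injective with closed range. -/
/-!
Write `a = ‖φ₁‖`, `b = ‖φ₂‖`, `c = ‖φ‖`, `l = ‖Lφ‖` and `m = min ϱ 1`. By Cauchy–Schwarz, (i)
becomes `b² / 2 - ε₁ c² ≤ l b`, while (ii) and `c ≤ a + b` give `m c ≤ l + ε₂ c + m b`. Either
`b ≤ 8 l`, so `m b ≤ 8 l`; or `b > 8 l`, and then (i) forces `3 b² ≤ 8 ε₁ c² < c²`, so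
`m b ≤ 3 m c / 5`. In both cases the smallness of `ε₁, ε₂` absorbs the error terms.
A bound `C ‖φ‖ ≤ ‖Lφ‖` on a closed subspace makes `L` antilipschitz there, hence injective with
closed range.
-/

theorem mul_le_of_split_estimates {m ε₁ ε₂ a b c l : ℝ} (hm : m ≤ 1) (hε₁ : 0 ≤ ε₁)
    (hε₂ : 0 ≤ ε₂) (hsmall : 8 * (ε₁ + ε₂) < m) (hb : 0 ≤ b) (hc : 0 ≤ c) (hcab : c ≤ a + b)
    (hi : 1 / 2 * b ^ 2 - ε₁ * c ^ 2 ≤ l * b) (hii : m * a - ε₂ * c ≤ l) :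
    1 / 16 * m * c ≤ l := by
  have hm₀ : 0 ≤ m := by linarith
  have hmc : 0 ≤ m * c := mul_nonneg hm₀ hc
  have hsplit : m * c ≤ l + ε₂ * c + m * b := by
    nlinarith [mul_le_mul_of_nonneg_left hcab hm₀]
  have hε₂c : ε₂ * c ≤ m / 8 * c := mul_le_mul_of_nonneg_right (by linarith) hc
  rcases le_or_gt b (8 * l) with hbl | hbl
  · have hmb : m * b ≤ 8 * l := (mul_le_of_le_one_left hb hm).trans hbl
    linarith
  · have hlb : l * b ≤ 1 / 8 * b ^ 2 := by nlinarith
    have hε₁c : ε₁ * c ^ 2 ≤ m / 8 * c ^ 2 :=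
      mul_le_mul_of_nonneg_right (by linarith) (sq_nonneg c)
    have hmc₂ : m * c ^ 2 ≤ c ^ 2 := mul_le_of_le_one_left (sq_nonneg c) hm
    have hbc₂ : 3 * b ^ 2 ≤ c ^ 2 := by linarith
    have hbc : 5 * b ≤ 3 * c := by
      refine (pow_le_pow_iff_left₀ (by positivity) (by positivity) two_ne_zero).1 ?_
      linarith [mul_pow 5 b 2, mul_pow 3 c 2, sq_nonneg c]
    nlinarith [mul_le_mul_of_nonneg_left hbc hm₀]

namespace ContinuousLinearMap

variable {𝕜 E F : Type*} [NontriviallyNormedField 𝕜] [NormedAddCommGroup E] [NormedSpace 𝕜 E]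
  [NormedAddCommGroup F] [NormedSpace 𝕜 F] (L : E →L[𝕜] F) (S : Submodule 𝕜 E) {C : ℝ}

theorem antilipschitz_comp_subtypeL_of_mul_norm_le (hC : 0 < C)
    (h : ∀ x ∈ S, C * ‖x‖ ≤ ‖L x‖) :
    AntilipschitzWith (Real.toNNReal C⁻¹) (L.comp S.subtypeL) :=
  (L.comp S.subtypeL).antilipschitz_of_bound fun x => by
    rw [Real.coe_toNNReal _ (inv_nonneg.2 hC.le), le_inv_mul_iff₀ hC]
    exact h x x.2

theorem injOn_of_mul_norm_le (hC : 0 < C) (h : ∀ x ∈ S, C * ‖x‖ ≤ ‖L x‖) :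
    Set.InjOn L S := fun x hx y hy hxy =>
  congrArg Subtype.val <| (L.antilipschitz_comp_subtypeL_of_mul_norm_le S hC h).injective
    (a₁ := ⟨x, hx⟩) (a₂ := ⟨y, hy⟩) hxy

theorem isClosed_image_of_mul_norm_le [CompleteSpace E] (hS : IsClosed (S : Set E))
    (hC : 0 < C) (h : ∀ x ∈ S, C * ‖x‖ ≤ ‖L x‖) : IsClosed (L '' S) := by
  have : CompleteSpace S := hS.completeSpace_coe
  have hrange := (L.antilipschitz_comp_subtypeL_of_mul_norm_le S hC h).isClosed_range
    (L.comp S.subtypeL).uniformContinuous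
  rwa [coe_comp, Set.range_comp, Submodule.coe_subtypeL, Submodule.coe_subtype,
    Subtype.range_coe] at hrange

end ContinuousLinearMap

theorem stmt_16_general {H : Type*} [NormedAddCommGroup H] [InnerProductSpace ℝ H]
    [CompleteSpace H]
    (E : Submodule ℝ H) (hE : IsClosed (E : Set H))
    (L : H →L[ℝ] H)
    (ϱ ε1 ε2 : ℝ) (hε1 : 0 ≤ ε1) (hε2 : 0 ≤ ε2)
    (hsmall : 8 * (ε1 + ε2) < min ϱ 1)
    (hdec : ∀ φ ∈ E, ∃ φ1 φ2 : H, φ1 ∈ E ∧ φ2 ∈ E ∧ φ = φ1 + φ2 ∧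
      ‖φ1‖ + ‖φ2‖ ≤ 2 * ‖φ‖ ∧
      (inner ℝ (L φ) φ2 : ℝ) ≥ (1/2) * ‖φ2‖ ^ 2 - ε1 * ‖φ‖ ^ 2 ∧
      ‖L φ‖ ≥ ϱ * ‖φ1‖ - ε2 * ‖φ‖) :
    (∀ φ ∈ E, (1/16) * min ϱ 1 * ‖φ‖ ≤ ‖L φ‖) ∧
    (∀ φ ∈ E, ∀ ψ ∈ E, L φ = L ψ → φ = ψ) ∧
    IsClosed (L '' (E : Set H)) := by
  have hbound : ∀ φ ∈ E, (1/16) * min ϱ 1 * ‖φ‖ ≤ ‖L φ‖ := by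
    intro φ hφ
    obtain ⟨φ1, φ2, -, -, rfl, -, hi, hii⟩ := hdec φ hφ
    refine mul_le_of_split_estimates (min_le_right ϱ 1) hε1 hε2 hsmall (norm_nonneg φ2)
      (norm_nonneg _) (norm_add_le φ1 φ2) (hi.trans (real_inner_le_norm _ _)) ?_
    exact (sub_le_sub_right
      (mul_le_mul_of_nonneg_right (min_le_left ϱ 1) (norm_nonneg φ1)) _).trans hii
  have hC : 0 < 1/16 * min ϱ 1 := by linarith
  exact ⟨hbound, L.injOn_of_mul_norm_le E hC hbound,
    L.isClosed_image_of_mul_norm_le E hE hC hbound⟩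

theorem stmt_16 {H : Type*} [NormedAddCommGroup H] [InnerProductSpace ℝ H]
    [CompleteSpace H]
    (E : Submodule ℝ H) (hE : IsClosed (E : Set H))
    (L : H →L[ℝ] H) (hLsa : ∀ x y : H, (inner ℝ (L x) y : ℝ) = inner ℝ x (L y))
    (ϱ ε1 ε2 : ℝ) (hϱ : 0 < ϱ) (hε1 : 0 ≤ ε1) (hε2 : 0 ≤ ε2)
    (hsmall : 8 * (ε1 + ε2) < min ϱ 1)
    (hdec : ∀ φ ∈ E, ∃ φ1 φ2 : H, φ1 ∈ E ∧ φ2 ∈ E ∧ φ = φ1 + φ2 ∧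
      ‖φ1‖ + ‖φ2‖ ≤ 2 * ‖φ‖ ∧
      (inner ℝ (L φ) φ2 : ℝ) ≥ (1/2) * ‖φ2‖ ^ 2 - ε1 * ‖φ‖ ^ 2 ∧
      ‖L φ‖ ≥ ϱ * ‖φ1‖ - ε2 * ‖φ‖) :
    (∀ φ ∈ E, (1/16) * min ϱ 1 * ‖φ‖ ≤ ‖L φ‖) ∧
    (∀ φ ∈ E, ∀ ψ ∈ E, L φ = L ψ → φ = ψ) ∧
    IsClosed (L '' (E : Set H)) :=
  stmt_16_general E hE L ϱ ε1 ε2 hε1 hε2 hsmall hdec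
end
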